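/- arXiv:2111.12605 — 2 statements merged into one kernel-verified Lean document; each statement's English description precedes it below -/
import Mathlib

section
/- Let A be a C*-algebra, E a Hilbert A-module, n ∈ ℕ, and x₁,…,xₙ ∈ E. Then μ*ₙ(x₁,…,xₙ) = sup{ ‖Σᵢ₌₁ⁿ xᵢ·aᵢ‖ : a₁,…,aₙ ∈ A, ‖Σᵢ₌₁ⁿ aᵢ*aᵢ‖ ≤ 1 }. -/
open scoped InnerProductSpace RightActions

noncomputable section

/-- The Hilbert C⋆-module class as Mathlib stated it in December 2024 (right `A`-module). -/
class RightCStarModule (A : outParam <| Type*) (E : Type*) [NonUnitalSemiring A] [StarRing A]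
    [Module ℂ A] [AddCommGroup E] [Module ℂ E] [PartialOrder A] [SMul Aᵐᵒᵖ E] [Norm A] [Norm E]
    extends Inner A E where
  inner_add_right {x} {y} {z} : inner x (y + z) = inner x y + inner x z
  inner_self_nonneg {x} : 0 ≤ inner x x
  inner_self {x} : inner x x = 0 ↔ x = 0
  inner_op_smul_right {a : A} {x y : E} : inner x (y <• a) = inner x y * a
  inner_smul_right_complex {z : ℂ} {x} {y} : inner x (z • y) = z • inner x y
  star_inner x y : star (inner x y) = inner y x
  norm_eq_sqrt_norm_inner_self x : ‖x‖ = √‖inner x x‖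

variable {A : Type*} [NonUnitalCStarAlgebra A] [PartialOrder A] [StarOrderedRing A]
variable {E : Type*} [NormedAddCommGroup E] [NormedSpace ℂ E] [SMul Aᵐᵒᵖ E]
  [RightCStarModule A E] [CompleteSpace E]

/-- `μ*ₙ(x₁,…,xₙ) = sup { ‖Σᵢ ⟪y, xᵢ⟫⟪xᵢ, y⟫‖^(1/2) : y ∈ E, ‖y‖ ≤ 1 }`. -/
def muStar {n : ℕ} (x : Fin n → E) : ℝ :=
  ⨆ y : {y : E // ‖y‖ ≤ 1}, Real.sqrt ‖∑ i, ⟪(y : E), x i⟫_A * ⟪x i, (y : E)⟫_A‖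

/-!
The map `T y = (⟪xᵢ, y⟫)ᵢ` from `E` to the standard module `Aⁿ` has the adjoint
`S a = Σᵢ xᵢ aᵢ`, since `⟪y, S a⟫ = Σᵢ ⟪y, xᵢ⟫ aᵢ = ⟪T y, a⟫`. The left-hand side is the norm of
`T` and the right-hand side that of `S`, and an adjointable map has the same norm as its adjoint:
`‖S a‖² = ‖⟪T (S a), a⟫‖ ≤ ‖T‖ ‖S a‖ ‖a‖`, and symmetrically.

In Mathlib's convention a right Hilbert `A`-module is a Hilbert C⋆-module over `Aᵐᵒᵖ`, and `Aⁿ`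
becomes `C⋆ᵐᵒᵈ(Aᵐᵒᵖ, Fin n → Aᵐᵒᵖ)`.
-/

section UnitBallSupremum

variable {V : Type*} [NormedAddCommGroup V]

lemma le_iSup_unitBall_mul_norm [NormedSpace ℝ V] {f : V → ℝ}
    (hf : ∀ (c : ℝ) v, f (c • v) = |c| * f v)
    (hbdd : BddAbove (Set.range fun v : {v : V // ‖v‖ ≤ 1} ↦ f v)) (v : V) :
    f v ≤ (⨆ w : {w : V // ‖w‖ ≤ 1}, f w) * ‖v‖ := by
  rcases eq_or_ne v 0 with rfl | hv
  · simpa using (hf 0 0).le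
  have hv' : 0 < ‖v‖ := norm_pos_iff.mpr hv
  have hunit : ‖‖v‖⁻¹ • v‖ ≤ 1 := by
    rw [norm_smul, norm_inv, norm_norm, inv_mul_cancel₀ hv'.ne']
  have := le_ciSup hbdd ⟨‖v‖⁻¹ • v, hunit⟩
  rw [hf, abs_of_pos (inv_pos.mpr hv')] at this
  rwa [inv_mul_le_iff₀ hv', mul_comm] at this

lemma iSup_unitBall_le {f : V → ℝ} {M : ℝ} (hM : 0 ≤ M) (h : ∀ v, f v ≤ M * ‖v‖) :
    ⨆ w : {w : V // ‖w‖ ≤ 1}, f w ≤ M := by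
  have : Nonempty {w : V // ‖w‖ ≤ 1} := ⟨⟨0, by simp⟩⟩
  exact ciSup_le fun w ↦ (h w).trans (mul_le_of_le_one_right hM w.2)

lemma bddAbove_unitBall_of_le_mul_norm {f : V → ℝ} {M : ℝ} (h : ∀ v, f v ≤ M * ‖v‖) :
    BddAbove (Set.range fun v : {v : V // ‖v‖ ≤ 1} ↦ f v) :=
  ⟨max M 0, Set.forall_mem_range.2 fun v ↦ (h v).trans <|
    (mul_le_mul_of_nonneg_right (le_max_left M 0) (norm_nonneg _)).trans
      (mul_le_of_le_one_right (le_max_right M 0) v.2)⟩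

end UnitBallSupremum

namespace CStarModule

variable {B : Type*} [NonUnitalCStarAlgebra B] [PartialOrder B]
variable {V W : Type*} [NormedAddCommGroup V] [NormedSpace ℂ V] [SMul B V] [CStarModule B V]
  [NormedAddCommGroup W] [NormedSpace ℂ W] [SMul B W] [CStarModule B W]

lemma ext_inner_left {u w : V} (h : ∀ v : V, ⟪v, u⟫_B = ⟪v, w⟫_B) : u = w := by
  rw [← sub_eq_zero, ← inner_self (A := B), inner_sub_right, h, sub_self]

variable (B) in
def IsAdjointPair (T : V → W) (S : W → V) : Prop :=
  ∀ v w, ⟪T v, w⟫_B = ⟪v, S w⟫_B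

namespace IsAdjointPair

variable {T : V → W} {S : W → V}

lemma symm (h : IsAdjointPair B T S) : IsAdjointPair B S T := fun w v ↦ by
  rw [← star_inner, ← h, star_inner]

lemma map_real_smul (h : IsAdjointPair B T S) (c : ℝ) (w : W) : S (c • w) = c • S w :=
  ext_inner_left fun v ↦ by rw [← h, inner_smul_right_real, inner_smul_right_real, h]

lemma norm_map_real_smul (h : IsAdjointPair B T S) (c : ℝ) (w : W) :
    ‖S (c • w)‖ = |c| * ‖S w‖ := by
  rw [h.map_real_smul, norm_smul, Real.norm_eq_abs]

variable [StarOrderedRing B]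

lemma norm_le_mul_norm (h : IsAdjointPair B T S) {M : ℝ} (hM : 0 ≤ M)
    (hT : ∀ v, ‖T v‖ ≤ M * ‖v‖) (w : W) : ‖S w‖ ≤ M * ‖w‖ := by
  have key : ‖S w‖ ^ 2 ≤ ‖S w‖ * (M * ‖w‖) := calc
    ‖S w‖ ^ 2 = ‖⟪T (S w), w⟫_B‖ := by rw [norm_sq_eq B, h]
    _ ≤ ‖T (S w)‖ * ‖w‖ := norm_inner_le W
    _ ≤ M * ‖S w‖ * ‖w‖ := by gcongr; exact hT _
    _ = ‖S w‖ * (M * ‖w‖) := by ring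
  nlinarith [norm_nonneg (S w), mul_nonneg hM (norm_nonneg w)]

theorem iSup_unitBall_norm_eq (h : IsAdjointPair B T S)
    (hT : BddAbove (Set.range fun v : {v : V // ‖v‖ ≤ 1} ↦ ‖T v‖)) :
    ⨆ v : {v : V // ‖v‖ ≤ 1}, ‖T v‖ = ⨆ w : {w : W // ‖w‖ ≤ 1}, ‖S w‖ := by
  set normT := ⨆ v : {v : V // ‖v‖ ≤ 1}, ‖T v‖
  set normS := ⨆ w : {w : W // ‖w‖ ≤ 1}, ‖S w‖
  have hnormT : 0 ≤ normT := Real.iSup_nonneg fun _ ↦ norm_nonneg _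
  have hnormS : 0 ≤ normS := Real.iSup_nonneg fun _ ↦ norm_nonneg _
  have hT_le : ∀ v, ‖T v‖ ≤ normT * ‖v‖ :=
    le_iSup_unitBall_mul_norm (f := fun v ↦ ‖T v‖) h.symm.norm_map_real_smul hT
  have hS_le : ∀ w, ‖S w‖ ≤ normT * ‖w‖ := h.norm_le_mul_norm hnormT hT_le
  have hS_le' : ∀ w, ‖S w‖ ≤ normS * ‖w‖ :=
    le_iSup_unitBall_mul_norm (f := fun w ↦ ‖S w‖) h.norm_map_real_smul
      (bddAbove_unitBall_of_le_mul_norm hS_le)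
  have hT_le' : ∀ v, ‖T v‖ ≤ normS * ‖v‖ := h.symm.norm_le_mul_norm hnormS hS_le'
  exact le_antisymm (iSup_unitBall_le hnormS hT_le') (iSup_unitBall_le hnormT hS_le)

end IsAdjointPair

section StandardModule

open WithCStarModule

variable [StarOrderedRing B] {ι : Type*} [Fintype ι]

lemma isAdjointPair_inner_sum_smul (x : ι → V) :
    IsAdjointPair B (fun y ↦ (equiv B (ι → B)).symm fun i ↦ ⟪x i, y⟫_B)
      (fun w ↦ ∑ i, w i • x i) := fun y w ↦ by
  simp [inner_sum_right, pi_inner, inner_def]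

lemma norm_equiv_symm_inner_le (x : ι → V) (y : V) :
    ‖(equiv B (ι → B)).symm fun i ↦ ⟪x i, y⟫_B‖ ≤ (∑ i, ‖x i‖) * ‖y‖ := by
  refine (pi_norm_le_sum_norm _).trans ?_
  rw [Finset.sum_mul]
  exact Finset.sum_le_sum fun i _ ↦ norm_inner_le V

theorem iSup_norm_inner_eq_iSup_norm_sum_smul (x : ι → V) :
    ⨆ y : {y : V // ‖y‖ ≤ 1}, ‖(equiv B (ι → B)).symm fun i ↦ ⟪x i, (y : V)⟫_B‖ =
      ⨆ w : {w : C⋆ᵐᵒᵈ(B, ι → B) // ‖w‖ ≤ 1}, ‖∑ i, w.1 i • x i‖ :=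
  (isAdjointPair_inner_sum_smul x).iSup_unitBall_norm_eq
    (bddAbove_unitBall_of_le_mul_norm (norm_equiv_symm_inner_le x))

end StandardModule

end CStarModule

section RightModule

open MulOpposite WithCStarModule

omit [StarOrderedRing A] [CompleteSpace E] in
instance RightCStarModule.toCStarModuleMulOpposite : CStarModule Aᵐᵒᵖ E where
  inner x y := op ⟪x, y⟫_A
  inner_add_right := by simp [RightCStarModule.inner_add_right]
  inner_self_nonneg := op_nonneg.mpr RightCStarModule.inner_self_nonneg
  inner_self := by simp [RightCStarModule.inner_self]
  inner_op_smul_right {a x y} := by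
    rw [← op_unop a, RightCStarModule.inner_op_smul_right, op_mul]
  inner_smul_right_complex := by simp [RightCStarModule.inner_smul_right_complex]
  star_inner x y := by rw [← op_star, RightCStarModule.star_inner]
  norm_eq_sqrt_norm_inner_self x := RightCStarModule.norm_eq_sqrt_norm_inner_self (A := A) x

lemma norm_equiv_symm_op {ι : Type*} [Fintype ι] (a : ι → A) :
    ‖(equiv Aᵐᵒᵖ (ι → Aᵐᵒᵖ)).symm (fun i ↦ op (a i))‖ = √‖∑ i, star (a i) * a i‖ := by
  simp [pi_norm, inner_def, ← op_star, ← op_mul, ← Finset.op_sum, norm_op]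

omit [CompleteSpace E] in
lemma muStar_eq_iSup_norm_equiv_symm_inner {n : ℕ} (x : Fin n → E) :
    muStar x = ⨆ y : {y : E // ‖y‖ ≤ 1},
      ‖(equiv Aᵐᵒᵖ (Fin n → Aᵐᵒᵖ)).symm fun i ↦ ⟪x i, (y : E)⟫_Aᵐᵒᵖ‖ := by
  refine iSup_congr fun y ↦ ?_
  rw [show (fun i ↦ ⟪x i, (y : E)⟫_Aᵐᵒᵖ) = fun i ↦ op ⟪x i, (y : E)⟫_A from rfl,
    norm_equiv_symm_op]
  simp only [RightCStarModule.star_inner]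

omit [NormedSpace ℂ E] [RightCStarModule A E] [CompleteSpace E] in
lemma sSup_norm_sum_op_smul_eq_iSup {n : ℕ} (x : Fin n → E) :
    sSup {r : ℝ | ∃ a : Fin n → A, ‖∑ i, star (a i) * a i‖ ≤ 1 ∧ r = ‖∑ i, x i <• a i‖} =
      ⨆ w : {w : C⋆ᵐᵒᵈ(Aᵐᵒᵖ, Fin n → Aᵐᵒᵖ) // ‖w‖ ≤ 1}, ‖∑ i, w.1 i • x i‖ := by
  refine congrArg sSup (Set.ext fun r ↦ ⟨?_, ?_⟩)
  · rintro ⟨a, ha, rfl⟩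
    refine ⟨⟨(equiv _ _).symm fun i ↦ op (a i), ?_⟩, rfl⟩
    rwa [norm_equiv_symm_op, Real.sqrt_le_one]
  · rintro ⟨⟨w, hw⟩, rfl⟩
    refine ⟨fun i ↦ unop (w i), ?_, rfl⟩
    rwa [← Real.sqrt_le_one, ← norm_equiv_symm_op]

end RightModule

/-- `μ*ₙ(x₁,…,xₙ) = sup { ‖Σᵢ xᵢ·aᵢ‖ : a₁,…,aₙ ∈ A, ‖Σᵢ aᵢ*aᵢ‖ ≤ 1 }`. -/
theorem muStar_eq_sup_smul {n : ℕ} (x : Fin n → E) :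
    muStar x = sSup {r : ℝ | ∃ a : Fin n → A,
      ‖∑ i, star (a i) * a i‖ ≤ 1 ∧ r = ‖∑ i, x i <• a i‖} := by
  rw [muStar_eq_iSup_norm_equiv_symm_inner, sSup_norm_sum_op_smul_eq_iSup,
    CStarModule.iSup_norm_inner_eq_iSup_norm_sum_smul]
end
end

section
/- Let A be a C*-algebra, viewed as a Hilbert A-module over itself with inner product ⟨a,b⟩ = a*b. Then every adjointable map T : A → A satisfies π̃₂(T) = ‖T‖; in particular π̃₂(T) < ∞ for every adjointable T, i.e. Π̃₂(A) = L(A). -/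
open scoped InnerProductSpace RightActions ENNReal

noncomputable section

/-- The December 2024 Mathlib `CStarModule` (right modules, `⟪x, y <• a⟫ = ⟪x, y⟫ * a`). -/
class CStarModuleRight (A : outParam <| Type*) (E : Type*) [NonUnitalSemiring A] [StarRing A]
    [Module ℂ A] [AddCommGroup E] [Module ℂ E] [PartialOrder A] [SMul Aᵐᵒᵖ E] [Norm A] [Norm E]
    extends Inner A E where
  inner_add_right {x} {y} {z} : inner x (y + z) = inner x y + inner x z
  inner_self_nonneg {x} : 0 ≤ inner x x
  inner_self {x} : inner x x = 0 ↔ x = 0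
  inner_op_smul_right {a : A} {x y : E} : inner x (y <• a) = inner x y * a
  inner_smul_right_complex {z : ℂ} {x} {y} : inner x (z • y) = z • inner x y
  star_inner x y : star (inner x y) = inner y x
  norm_eq_sqrt_norm_inner_self x : ‖x‖ = √‖inner x x‖

attribute [instance 1100] CStarModuleRight.toInner

variable {A : Type*} [NonUnitalCStarAlgebra A] [PartialOrder A] [StarOrderedRing A]

/-- The December 2024 Mathlib instance: `A` as a right module over itself, `⟪x, y⟫ = star x * y`. -/
instance CStarModuleRight.instSelf : CStarModuleRight A A where
  inner x y := star x * y
  inner_add_right := mul_add ..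
  inner_self_nonneg := star_mul_self_nonneg _
  inner_self := CStarRing.star_mul_self_eq_zero_iff _
  inner_op_smul_right := by intro a x y; simp [mul_assoc]
  inner_smul_right_complex := mul_smul_comm ..
  star_inner x y := by simp
  norm_eq_sqrt_norm_inner_self {x} := by
    rw [← sq_eq_sq₀ (norm_nonneg _) (by positivity)]
    simpa [sq] using Eq.symm <| CStarRing.norm_star_mul_self

/-- `μₙ(x₁,…,xₙ) = sup { ‖Σᵢ ⟪xᵢ, y⟫⟪y, xᵢ⟫‖^(1/2) : y ∈ E, ‖y‖ ≤ 1 }`. -/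
def mu {E : Type*} [NormedAddCommGroup E] [NormedSpace ℂ E] [SMul Aᵐᵒᵖ E]
    [CStarModuleRight A E] {n : ℕ} (x : Fin n → E) : ℝ :=
  ⨆ y : {y : E // ‖y‖ ≤ 1}, Real.sqrt ‖∑ i, ⟪x i, (y : E)⟫_A * ⟪(y : E), x i⟫_A‖

/-- `π̃₂(T) = sup { ‖Σᵢ ⟪Txᵢ, Txᵢ⟫‖^(1/2) : n ∈ ℕ, μₙ(x₁,…,xₙ) ≤ 1 }` as an element
of `[0,∞]`. -/
def piTwo {E F : Type*} [NormedAddCommGroup E] [NormedSpace ℂ E] [SMul Aᵐᵒᵖ E]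
    [CStarModuleRight A E] [NormedAddCommGroup F] [NormedSpace ℂ F] [SMul Aᵐᵒᵖ F]
    [CStarModuleRight A F] (T : E → F) : ℝ≥0∞ :=
  ⨆ (n : ℕ) (x : Fin n → E) (_ : mu x ≤ 1),
    ENNReal.ofReal (Real.sqrt ‖∑ i, ⟪T (x i), T (x i)⟫_A‖)

/-! For a finite family `x` in `A`, `μ(x)² = ‖Σ xᵢ* xᵢ‖`: the bound `≤` comes from
`xᵢ* y y* xᵢ ≤ ‖y‖² xᵢ* xᵢ`, and `≥` from letting `y` run through an increasing approximate
unit. Adjointness turns `⟪T xᵢ, y⟫` into `⟪xᵢ, S y⟫` with `‖S‖ ≤ ‖T‖`, so `μ(T x) ≤ ‖T‖ μ(x)`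
and hence `π̃₂(T) ≤ ‖T‖`; families of a single vector give the reverse inequality. -/

open Filter Topology

lemma inner_eq_star_mul (a b : A) : ⟪a, b⟫_A = star a * b := rfl

lemma Filter.IsIncreasingApproximateUnit.tendsto_mul_star_mul {l : Filter A}
    (hl : l.IsIncreasingApproximateUnit) (a : A) :
    Tendsto (fun y => y * (star y * a)) l (𝓝 a) := by
  have h : Tendsto (fun y => ‖y * a - a‖) l (𝓝 0) :=
    tendsto_iff_norm_sub_tendsto_zero.1 (hl.tendsto_mul_right a)
  rw [tendsto_iff_norm_sub_tendsto_zero]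
  refine squeeze_zero' (Eventually.of_forall fun _ => norm_nonneg _) ?_
    (by simpa using h.const_mul 2)
  filter_upwards [hl.eventually_star_eq, hl.eventually_norm] with y hstar hnorm
  calc ‖y * (star y * a) - a‖ = ‖y * (y * a - a) + (y * a - a)‖ := by
        rw [hstar, mul_sub]; abel_nf
    _ ≤ ‖y‖ * ‖y * a - a‖ + ‖y * a - a‖ :=
        (norm_add_le _ _).trans (add_le_add_left (norm_mul_le _ _) _)
    _ ≤ 2 * ‖y * a - a‖ := by nlinarith [norm_nonneg (y * a - a)]

lemma norm_sum_inner_mul_inner_le {n : ℕ} (x : Fin n → A) (y : A) :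
    ‖∑ i, ⟪x i, y⟫_A * ⟪y, x i⟫_A‖ ≤ ‖y‖ ^ 2 * ‖∑ i, ⟪x i, x i⟫_A‖ := by
  simp only [inner_eq_star_mul]
  have hconj : ∀ i ∈ Finset.univ, star (x i) * y * (star y * x i)
      ≤ ‖y * star y‖ • (star (x i) * x i) := fun i _ => by
    simpa only [mul_assoc] using
      CStarAlgebra.star_left_conjugate_le_norm_smul (a := x i) (IsSelfAdjoint.mul_star_self y)
  have hnonneg : 0 ≤ ∑ i, star (x i) * y * (star y * x i) :=
    Finset.sum_nonneg fun i _ => by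
      simpa [mul_assoc] using star_mul_self_nonneg (star y * x i)
  calc ‖∑ i, star (x i) * y * (star y * x i)‖
      ≤ ‖‖y * star y‖ • ∑ i, star (x i) * x i‖ := by
        rw [Finset.smul_sum]
        exact CStarAlgebra.norm_le_norm_of_nonneg_of_le hnonneg (Finset.sum_le_sum hconj)
    _ = ‖y‖ ^ 2 * ‖∑ i, star (x i) * x i‖ := by
        rw [norm_smul, norm_norm, CStarRing.norm_self_mul_star, sq]

lemma mu_eq_sqrt_norm_sum_inner_self {n : ℕ} (x : Fin n → A) :
    mu x = √‖∑ i, ⟪x i, x i⟫_A‖ := by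
  have hle : ∀ y : {y : A // ‖y‖ ≤ 1},
      √‖∑ i, ⟪x i, (y : A)⟫_A * ⟪(y : A), x i⟫_A‖ ≤ √‖∑ i, ⟪x i, x i⟫_A‖ := fun ⟨y, hy⟩ =>
    Real.sqrt_le_sqrt <| (norm_sum_inner_mul_inner_le x y).trans <|
      mul_le_of_le_one_left (norm_nonneg _) (pow_le_one₀ (norm_nonneg y) hy)
  have : Nonempty {y : A // ‖y‖ ≤ 1} := ⟨⟨0, by simp⟩⟩
  refine le_antisymm (ciSup_le hle) ?_
  have hl := CStarAlgebra.increasingApproximateUnit A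
  have := hl.neBot
  have hlim : Tendsto (fun y => ∑ i, ⟪x i, y⟫_A * ⟪y, x i⟫_A) (CStarAlgebra.approximateUnit A)
      (𝓝 (∑ i, ⟪x i, x i⟫_A)) := by
    simp only [inner_eq_star_mul, mul_assoc]
    exact tendsto_finsetSum _ fun i _ => (hl.tendsto_mul_star_mul (x i)).const_mul _
  refine le_of_tendsto hlim.norm.sqrt ?_
  filter_upwards [hl.eventually_norm] with y hy
  exact le_ciSup ⟨_, Set.forall_mem_range.2 hle⟩ (⟨y, hy⟩ : {y : A // ‖y‖ ≤ 1})

lemma norm_apply_le_of_adjoint {T : A →L[ℂ] A} {S : A → A}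
    (hT : ∀ a b : A, ⟪T a, b⟫_A = ⟪a, S b⟫_A) (y : A) : ‖S y‖ ≤ ‖T‖ * ‖y‖ := by
  have h : ‖S y‖ * ‖S y‖ ≤ ‖T‖ * ‖y‖ * ‖S y‖ :=
    calc ‖S y‖ * ‖S y‖ = ‖star (T (S y)) * y‖ := by
          rw [← inner_eq_star_mul, hT, inner_eq_star_mul, CStarRing.norm_star_mul_self]
      _ ≤ ‖T (S y)‖ * ‖y‖ := by rw [← norm_star (T (S y))]; exact norm_mul_le _ _
      _ ≤ ‖T‖ * ‖S y‖ * ‖y‖ := by gcongr; exact T.le_opNorm _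
      _ = ‖T‖ * ‖y‖ * ‖S y‖ := by ring
  rcases (norm_nonneg (S y)).eq_or_lt with h0 | h0
  · rw [← h0]; positivity
  · exact le_of_mul_le_mul_right h h0

lemma mu_comp_le_of_adjoint {T : A →L[ℂ] A} {S : A → A}
    (hT : ∀ a b : A, ⟪T a, b⟫_A = ⟪a, S b⟫_A) {n : ℕ} (x : Fin n → A) :
    mu (fun i => T (x i)) ≤ ‖T‖ * mu x := by
  have : Nonempty {y : A // ‖y‖ ≤ 1} := ⟨⟨0, by simp⟩⟩
  rw [mu_eq_sqrt_norm_sum_inner_self x]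
  refine ciSup_le fun ⟨y, hy⟩ => ?_
  have hterm : ∀ i, ⟪T (x i), y⟫_A * ⟪y, T (x i)⟫_A = ⟪x i, S y⟫_A * ⟪S y, x i⟫_A := fun i => by
    rw [← CStarModuleRight.star_inner (T (x i)), ← CStarModuleRight.star_inner (x i), hT]
  simp only [hterm]
  calc √‖∑ i, ⟪x i, S y⟫_A * ⟪S y, x i⟫_A‖ ≤ √(‖S y‖ ^ 2 * ‖∑ i, ⟪x i, x i⟫_A‖) :=
        Real.sqrt_le_sqrt (norm_sum_inner_mul_inner_le x (S y))
    _ = ‖S y‖ * √‖∑ i, ⟪x i, x i⟫_A‖ := by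
        rw [Real.sqrt_mul (sq_nonneg _), Real.sqrt_sq (norm_nonneg _)]
    _ ≤ ‖T‖ * √‖∑ i, ⟪x i, x i⟫_A‖ := by
        gcongr
        exact (norm_apply_le_of_adjoint hT y).trans (mul_le_of_le_one_right (norm_nonneg _) hy)

lemma ofReal_norm_apply_le_piTwo (T : A → A) {a : A} (ha : ‖a‖ ≤ 1) :
    ENNReal.ofReal ‖T a‖ ≤ piTwo T := by
  have hmu : mu (fun _ : Fin 1 => a) ≤ 1 := by
    rwa [mu_eq_sqrt_norm_sum_inner_self, Fin.sum_univ_one,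
      ← CStarModuleRight.norm_eq_sqrt_norm_inner_self]
  refine le_iSup_of_le 1 <| le_iSup₂_of_le (fun _ => a) hmu ?_
  rw [Fin.sum_univ_one, ← CStarModuleRight.norm_eq_sqrt_norm_inner_self]

/-- Viewing a C*-algebra `A` as a Hilbert `A`-module over itself (`⟪a, b⟫ = a* b`), every
adjointable `T : A → A` satisfies `π̃₂(T) = ‖T‖`; in particular `π̃₂(T) < ∞`, i.e.
`Π̃₂(A) = L(A)`. -/
theorem piTwo_eq_norm_of_adjointable (T : A →L[ℂ] A) (S : A →L[ℂ] A)
    (hT : ∀ (a b : A), ⟪T a, b⟫_A = ⟪a, S b⟫_A) :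
    piTwo (⇑T) = ENNReal.ofReal ‖T‖ ∧ piTwo (⇑T) < ⊤ := by
  have upper : piTwo (⇑T) ≤ ENNReal.ofReal ‖T‖ :=
    iSup_le fun n => iSup₂_le fun x hx => ENNReal.ofReal_le_ofReal <|
      calc √‖∑ i, ⟪T (x i), T (x i)⟫_A‖ = mu (fun i => T (x i)) :=
            (mu_eq_sqrt_norm_sum_inner_self _).symm
        _ ≤ ‖T‖ * mu x := mu_comp_le_of_adjoint hT x
        _ ≤ ‖T‖ := mul_le_of_le_one_right (norm_nonneg _) hx
  have hfin : piTwo (⇑T) ≠ ⊤ := ne_top_of_le_ne_top ENNReal.ofReal_ne_top upper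
  refine ⟨le_antisymm upper ?_, lt_top_iff_ne_top.2 hfin⟩
  rw [ENNReal.ofReal_le_iff_le_toReal hfin]
  exact T.opNorm_le_of_unit_norm ENNReal.toReal_nonneg fun a ha =>
    (ENNReal.ofReal_le_iff_le_toReal hfin).1 (ofReal_norm_apply_le_piTwo T ha.le)
end
end
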